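/- Let H = C^d with d ≥ 2 and S the swap operator. If a linear map Φ: B(H) → B(H⊗H) of the form Φ(X) = λ1(I⊗X) + λ2(X⊗I) + λ3 S(I⊗X) + λ4 S(X⊗I) + λ5 tr(X)(I⊗I) + λ6 tr(X)S is both covariant under unitary evolution and positive with broadcasting property tr_1[Φ(X)] = tr_2[Φ(X)] = X for all X, then a contradiction follows; i.e., no positive map of this form satisfies the broadcasting condition. -/

import Mathlib

open Matrix Kronecker ComplexOrder

/-- The swap operator on `H ⊗ H`, as a matrix: `S (x ⊗ y) = y ⊗ x`. -/
def swap (n : Type*) [DecidableEq n] : Matrix (n × n) (n × n) ℂ :=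
  Matrix.of fun p q => if p.1 = q.2 ∧ p.2 = q.1 then (1 : ℂ) else 0

/-- Partial trace over the first tensor factor: `tr₁ (A ⊗ B) = tr A • B`. -/
noncomputable def ptrace1 {n : Type*} [Fintype n] (M : Matrix (n × n) (n × n) ℂ) : Matrix n n ℂ :=
  Matrix.of fun j l => ∑ i, M (i, j) (i, l)

/-- Partial trace over the second tensor factor: `tr₂ (A ⊗ B) = tr B • A`. -/
noncomputable def ptrace2 {n : Type*} [Fintype n] (M : Matrix (n × n) (n × n) ℂ) : Matrix n n ℂ :=
  Matrix.of fun i k => ∑ j, M (i, j) (k, j)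

lemma swap_mul_apply' {n : Type*} [Fintype n] [DecidableEq n]
    (N : Matrix (n × n) (n × n) ℂ) (p q : n × n) :
    (swap n * N) p q = N (p.2, p.1) q := by
  rw [Matrix.mul_apply]
  rw [Finset.sum_eq_single (p.2, p.1)]
  · simp [_root_.swap]
  · rintro ⟨r1, r2⟩ _ hr
    have : ¬(p.1 = r2 ∧ p.2 = r1) := by
      rintro ⟨h1, h2⟩; exact hr (by simp [h1, h2])
    simp [_root_.swap, this]
  · simp

lemma psd_diag_nonneg {m : Type*} [Fintype m] [DecidableEq m]
    {M : Matrix m m ℂ} (hM : M.PosSemidef) (p : m) : 0 ≤ M p p := by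
  have h := hM.dotProduct_mulVec_nonneg (Pi.single p 1)
  simpa [dotProduct, Pi.single_apply, apply_ite, ite_mul, mul_ite] using h

lemma psd_apply_eq_zero {m : Type*} [Fintype m] [DecidableEq m]
    {M : Matrix m m ℂ} (hM : M.PosSemidef) {p : m} (hp : M p p = 0) (q : m) :
    M q p = 0 := by
  have h0 : star (Pi.single p 1) ⬝ᵥ M *ᵥ (Pi.single p (1:ℂ)) = 0 := by
    simpa [dotProduct, Pi.single_apply, apply_ite, ite_mul, mul_ite] using hp
  have h1 := (hM.dotProduct_mulVec_zero_iff _).mp h0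
  have h2 := congrFun h1 q
  simpa using h2


/-- No positive unitarily covariant map of the canonical form satisfies the
broadcasting condition. -/
theorem no_positive_covariant_broadcasting {d : ℕ} (hd : 2 ≤ d)
    (l1 l2 l3 l4 l5 l6 : ℂ)
    (Phi : Matrix (Fin d) (Fin d) ℂ → Matrix (Fin d × Fin d) (Fin d × Fin d) ℂ)
    (hPhi : ∀ X, Phi X = l1 • ((1 : Matrix (Fin d) (Fin d) ℂ) ⊗ₖ X)
        + l2 • (X ⊗ₖ (1 : Matrix (Fin d) (Fin d) ℂ))
        + l3 • (swap (Fin d) * ((1 : Matrix (Fin d) (Fin d) ℂ) ⊗ₖ X))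
        + l4 • (swap (Fin d) * (X ⊗ₖ (1 : Matrix (Fin d) (Fin d) ℂ)))
        + (l5 * X.trace) • (1 : Matrix (Fin d × Fin d) (Fin d × Fin d) ℂ)
        + (l6 * X.trace) • swap (Fin d))
    (hcov : ∀ U : Matrix (Fin d) (Fin d) ℂ, U ∈ Matrix.unitaryGroup (Fin d) ℂ →
      ∀ X, Phi (U * X * Uᴴ) = (U ⊗ₖ U) * Phi X * (Uᴴ ⊗ₖ Uᴴ))
    (hpos : ∀ X : Matrix (Fin d) (Fin d) ℂ, X.PosSemidef → (Phi X).PosSemidef)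
    (hbroad : ∀ X, ptrace1 (Phi X) = X ∧ ptrace2 (Phi X) = X) :
    False := by
  have key : ∀ (X : Matrix (Fin d) (Fin d) ℂ) (i j k l : Fin d),
      Phi X (i, j) (k, l)
        = l1 * ((if i = k then (1:ℂ) else 0) * X j l)
        + l2 * (X i k * (if j = l then (1:ℂ) else 0))
        + l3 * ((if j = k then (1:ℂ) else 0) * X i l)
        + l4 * (X j k * (if i = l then (1:ℂ) else 0))
        + l5 * X.trace * (if i = k ∧ j = l then (1:ℂ) else 0)
        + l6 * X.trace * (if i = l ∧ j = k then (1:ℂ) else 0) := by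
    intro X i j k l
    rw [hPhi]
    simp only [Matrix.add_apply, Matrix.smul_apply, swap_mul_apply', kroneckerMap_apply,
      Matrix.one_apply, smul_eq_mul, Prod.mk.injEq]
    simp [_root_.swap]
  set a : Fin d := ⟨0, by omega⟩ with ha
  set b : Fin d := ⟨1, by omega⟩ with hb
  have hab : a ≠ b := by simp [ha, hb, Fin.ext_iff]
  -- the matrix unit E_{aa}
  set E : Matrix (Fin d) (Fin d) ℂ := Matrix.of fun r s => if r = a ∧ s = a then 1 else 0 with hE
  have htrE : E.trace = 1 := by
    simp [Matrix.trace, Matrix.diag, hE, Finset.sum_ite_eq, ite_and]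
  have hEpsd : E.PosSemidef := by
    refine Matrix.PosSemidef.of_dotProduct_mulVec_nonneg ?_ ?_
    · ext r s
      simp only [conjTranspose_apply, hE, of_apply, apply_ite, star_one, star_zero]
      by_cases h1 : r = a <;> by_cases h2 : s = a <;> simp [h1, h2]
    · intro x
      have hcalc : star x ⬝ᵥ E *ᵥ x = star (x a) * x a := by
        simp [dotProduct, mulVec, hE, ite_and, Finset.mul_sum, ite_mul, mul_ite,
          Finset.sum_ite_eq, Finset.sum_ite_eq']
      rw [hcalc]
      exact star_mul_self_nonneg _
  -- the matrix unit E_{ab}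
  set F : Matrix (Fin d) (Fin d) ℂ := Matrix.of fun r s => if r = a ∧ s = b then 1 else 0 with hF
  have htrF : F.trace = 0 := by
    refine Finset.sum_eq_zero fun r _ => ?_
    rcases eq_or_ne r a with h | h <;> simp [hF, Matrix.diag, h, hab]
  -- equation A : d*l1 + l3 + l4 = 1
  have hA : (d : ℂ) * l1 + l3 + l4 = 1 := by
    have h1 := congrFun (congrFun (hbroad F).1 a) b
    simp only [ptrace1, Matrix.of_apply, key, htrF] at h1
    simp [hF, hab, ite_and, mul_ite, ite_mul, Finset.sum_add_distrib,
      Finset.sum_ite_eq, Finset.sum_ite_eq', Finset.sum_const, Finset.card_univ] at h1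
    linear_combination h1
  have hpsd := hpos E hEpsd
  -- the sum of relevant diagonal entries vanishes
  have hsum : ∑ j, Phi E (b, j) (b, j) = 0 := by
    have h2 := congrFun (congrFun (hbroad E).2 b) b
    simp only [ptrace2, Matrix.of_apply] at h2
    rw [h2]
    simp [hE, hab.symm, Ne.symm hab]
  have hz : ∀ j : Fin d, Phi E (b, j) (b, j) = 0 := by
    have := (Finset.sum_eq_zero_iff_of_nonneg
      (fun j _ => psd_diag_nonneg hpsd (b, j))).mp hsum
    exact fun j => this j (Finset.mem_univ j)
  -- e1 : l1 + l5 = 0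
  have e1 : l1 + l5 = 0 := by
    have h := hz a
    rw [key] at h
    rw [htrE] at h
    simp [hE, hab, Ne.symm hab, htrE] at h
    linear_combination h
  -- e2 : l5 + l6 = 0
  have e2 : l5 + l6 = 0 := by
    have h := hz b
    rw [key] at h
    rw [htrE] at h
    simp [hE, hab, Ne.symm hab, htrE] at h
    linear_combination h
  -- e3 : l3 + l6 = 0
  have e3 : l3 + l6 = 0 := by
    have h := psd_apply_eq_zero hpsd (hz a) (a, b)
    rw [key] at h
    rw [htrE] at h
    simp [hE, hab, Ne.symm hab, htrE] at h
    linear_combination h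
  -- e4 : l4 + l6 = 0, by hermiticity
  have e4 : l4 + l6 = 0 := by
    have hherm := congrFun (congrFun hpsd.1 (a, b)) (b, a)
    rw [Matrix.conjTranspose_apply] at hherm
    have h := psd_apply_eq_zero hpsd (hz a) (a, b)
    have h' : Phi E (b, a) (a, b) = 0 := by
      have hst : star (Phi E (b, a) (a, b)) = 0 := hherm.trans h
      exact star_eq_zero.mp hst
    rw [key] at h'
    rw [htrE] at h'
    simp [hE, hab, Ne.symm hab, htrE] at h'
    linear_combination h'
  have key2 : ((2:ℂ) - d) * l5 = 1 := by
    linear_combination hA - (d : ℂ) * e1 + 2 * e2 - e3 - e4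
  rcases eq_or_lt_of_le hd with hd2 | hd3
  · have : ((2:ℂ) - d) = 0 := by rw [← hd2]; norm_num
    rw [this, zero_mul] at key2
    exact zero_ne_one key2
  · set c : Fin d := ⟨2, hd3⟩ with hc
    have hac : c ≠ a := by simp [ha, hc, Fin.ext_iff]
    have hbc : c ≠ b := by simp [hb, hc, Fin.ext_iff]
    have e5 : l5 = 0 := by
      have h := hz c
      rw [key] at h
      rw [htrE] at h
      simp [hE, hab, Ne.symm hab, hac, hbc, Ne.symm hac, Ne.symm hbc, htrE] at h
      linear_combination h
    rw [e5, mul_zero] at key2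
    exact zero_ne_one key2
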